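/- arXiv:1102.2300 — 7 statements merged into one kernel-verified Lean document; each statement's English description precedes it below -/
import Mathlib

section
/- Let M be an N×N real symmetric matrix all of whose eigenvalues are at most d, where d > 0. Let 0 < 2ε < γ ≤ 1, and let W be the span of the eigenvectors of M with eigenvalue greater than (1−γ)d, with P_W the orthogonal projection onto W. If y is a unit vector with yᵀ M y ≥ (1−2ε)d, then ‖y − P_W y‖ ≤ √(2ε/γ); equivalently, ‖P_W y‖ ≥ √(1 − 2ε/γ). -/
/-!
Split `y = P_W y + u` with `u ⊥ W`. Since `W` is `M`-invariant and `M` is symmetric, `Wᗮ` is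
`M`-invariant too, so the quadratic form has no cross terms:
`yᵀMy = (P_W y)ᵀM(P_W y) + uᵀMu`. The first term is at most `d ‖P_W y‖²`, the top of the Rayleigh
quotient being an eigenvalue. On `Wᗮ` every eigenvalue of `M` is at most `(1 - γ)d`, as an
eigenvector above that level would lie in `W ∩ Wᗮ = 0`; hence `uᵀMu ≤ (1 - γ)d ‖u‖²`. With
`‖P_W y‖² + ‖u‖² = 1` this gives `(1 - 2ε)d ≤ d - γd ‖u‖²`, i.e. `‖u‖² ≤ 2ε/γ`.
-/

open Matrix Module End RCLike
open scoped InnerProductSpace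

variable {𝕜 E : Type*} [RCLike 𝕜] [NormedAddCommGroup E] [InnerProductSpace 𝕜 E]
  {T : E →ₗ[𝕜] E}

namespace LinearMap

variable (T) in
def eigenvectorSpanAbove (c : ℝ) : Submodule 𝕜 E :=
  Submodule.span 𝕜 {v | v ≠ 0 ∧ ∃ μ : ℝ, c < μ ∧ T v = (μ : 𝕜) • v}

theorem mem_eigenvectorSpanAbove_of_apply_eq_smul {c μ : ℝ} (hμ : c < μ) {v : E}
    (hv : T v = (μ : 𝕜) • v) : v ∈ T.eigenvectorSpanAbove c := by
  rcases eq_or_ne v 0 with rfl | hv₀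
  · exact Submodule.zero_mem _
  · exact Submodule.subset_span ⟨hv₀, μ, hμ, hv⟩

theorem apply_mem_eigenvectorSpanAbove {c : ℝ} {w : E} (hw : w ∈ T.eigenvectorSpanAbove c) :
    T w ∈ T.eigenvectorSpanAbove c := by
  refine (Submodule.span_le.mpr ?_ hw : w ∈ (T.eigenvectorSpanAbove c).comap T)
  rintro v ⟨-, μ, hμ, hv⟩
  rw [SetLike.mem_coe, Submodule.mem_comap, hv]
  exact Submodule.smul_mem _ _ (mem_eigenvectorSpanAbove_of_apply_eq_smul hμ hv)

namespace IsSymmetric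

theorem re_inner_le_of_forall_hasEigenvalue_le [FiniteDimensional 𝕜 E] (hT : T.IsSymmetric)
    {d : ℝ} (hd : ∀ μ : ℝ, HasEigenvalue T μ → μ ≤ d) (x : E) : re ⟪T x, x⟫_𝕜 ≤ d * ‖x‖ ^ 2 := by
  rcases eq_or_ne x 0 with rfl | hx
  · simp
  have : Nontrivial E := ⟨⟨x, 0, hx⟩⟩
  have hbdd : BddAbove (Set.range fun y : { y : E // y ≠ 0 } ↦ re ⟪T y, y⟫_𝕜 / ‖(y : E)‖ ^ 2) :=
    ⟨‖toContinuousLinearMap T‖, Set.forall_mem_range.2 fun y ↦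
      (le_abs_self _).trans ((toContinuousLinearMap T).rayleighQuotient_le_norm y)⟩
  rw [← div_le_iff₀ (by positivity)]
  exact (le_ciSup hbdd ⟨x, hx⟩).trans (hd _ hT.hasEigenvalue_iSup_of_finiteDimensional)

variable {W : Submodule 𝕜 E}

theorem orthogonal_invariant (hT : T.IsSymmetric) (hW : ∀ w ∈ W, T w ∈ W) :
    ∀ u ∈ Wᗮ, T u ∈ Wᗮ := fun u hu w hw ↦ by
  rw [← hT, Submodule.inner_right_of_mem_orthogonal (hW w hw) hu]

theorem inner_add_apply_add_of_mem_orthogonal (hT : T.IsSymmetric) (hW : ∀ w ∈ W, T w ∈ W)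
    {w u : E} (hw : w ∈ W) (hu : u ∈ Wᗮ) :
    ⟪T (w + u), w + u⟫_𝕜 = ⟪T w, w⟫_𝕜 + ⟪T u, u⟫_𝕜 := by
  have h₁ : ⟪T w, u⟫_𝕜 = 0 := Submodule.inner_right_of_mem_orthogonal (hW w hw) hu
  have h₂ : ⟪T u, w⟫_𝕜 = 0 :=
    Submodule.inner_left_of_mem_orthogonal hw (hT.orthogonal_invariant hW u hu)
  simp only [map_add, inner_add_left, inner_add_right, h₁, h₂]
  ring

theorem re_inner_le_of_mem_orthogonal [FiniteDimensional 𝕜 E] (hT : T.IsSymmetric)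
    (hW : ∀ w ∈ W, T w ∈ W) {c : ℝ} (hWc : ∀ (μ : ℝ) (v : E), c < μ → T v = (μ : 𝕜) • v → v ∈ W)
    {u : E} (hu : u ∈ Wᗮ) : re ⟪T u, u⟫_𝕜 ≤ c * ‖u‖ ^ 2 := by
  have hTW := hT.restrict_invariant (hT.orthogonal_invariant hW)
  refine hTW.re_inner_le_of_forall_hasEigenvalue_le (fun μ hμ ↦ ?_) ⟨u, hu⟩
  obtain ⟨⟨v, hvW⟩, hv⟩ := hμ.exists_hasEigenvector
  by_contra! hcμ
  have hTv : T v = (μ : 𝕜) • v := congrArg Subtype.val (mem_eigenspace_iff.mp hv.1)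
  have : v = 0 := Submodule.disjoint_def.mp W.orthogonal_disjoint v (hWc μ v hcμ hTv) hvW
  exact hv.2 (by simpa using this)

theorem re_inner_le_starProjection_eigenvectorSpanAbove [FiniteDimensional 𝕜 E]
    (hT : T.IsSymmetric) {c d : ℝ} (hd : ∀ μ : ℝ, HasEigenvalue T μ → μ ≤ d) (y : E) :
    re ⟪T y, y⟫_𝕜 ≤ d * ‖(T.eigenvectorSpanAbove c).starProjection y‖ ^ 2 +
      c * ‖y - (T.eigenvectorSpanAbove c).starProjection y‖ ^ 2 := by
  have hW : ∀ w ∈ T.eigenvectorSpanAbove c, T w ∈ T.eigenvectorSpanAbove c :=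
    fun _ ↦ apply_mem_eigenvectorSpanAbove
  have hsplit := hT.inner_add_apply_add_of_mem_orthogonal hW
    (Submodule.starProjection_apply_mem _ y) (Submodule.sub_starProjection_mem_orthogonal y)
  rw [add_sub_cancel] at hsplit
  rw [hsplit, map_add]
  gcongr
  · exact hT.re_inner_le_of_forall_hasEigenvalue_le hd _
  · exact hT.re_inner_le_of_mem_orthogonal hW
      (fun μ v hμ hv ↦ mem_eigenvectorSpanAbove_of_apply_eq_smul hμ hv)
      (Submodule.sub_starProjection_mem_orthogonal y)

end IsSymmetric

end LinearMap

theorem close_to_top_eigenspace_general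
    {N : ℕ} (M : Matrix (Fin N) (Fin N) ℝ) (hM : M.IsSymm)
    (d ε γ : ℝ) (hd : 0 < d) (hε : 0 < 2 * ε) (hεγ : 2 * ε < γ)
    (heig : ∀ (μ : ℝ) (v : EuclideanSpace ℝ (Fin N)),
        v ≠ 0 → M.mulVec v = μ • v → μ ≤ d)
    (W : Submodule ℝ (EuclideanSpace ℝ (Fin N)))
    (hW : W = Submodule.span ℝ {v : EuclideanSpace ℝ (Fin N) |
        v ≠ 0 ∧ ∃ μ : ℝ, (1 - γ) * d < μ ∧ M.mulVec v = μ • v})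
    (y : EuclideanSpace ℝ (Fin N)) (hy : ‖y‖ = 1)
    (hquad : (1 - 2 * ε) * d ≤ y ⬝ᵥ M.mulVec y) :
    ‖y - (Submodule.orthogonalProjectionOnto W y : EuclideanSpace ℝ (Fin N))‖ ≤ Real.sqrt (2 * ε / γ) ∧
    Real.sqrt (1 - 2 * ε / γ)
      ≤ ‖(Submodule.orthogonalProjectionOnto W y : EuclideanSpace ℝ (Fin N))‖ := by
  set T := toEuclideanLin M
  have hT : T.IsSymmetric := isSymmetric_toEuclideanLin_iff.mpr (isHermitian_iff_isSymm.mpr hM)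
  have happly (μ : ℝ) (v : EuclideanSpace ℝ (Fin N)) : T v = μ • v ↔ M *ᵥ v = μ • v :=
    (WithLp.ofLp_injective 2).eq_iff.symm
  have hWT : W = T.eigenvectorSpanAbove ((1 - γ) * d) := by
    simp only [hW, LinearMap.eigenvectorSpanAbove, RCLike.ofReal_real_eq_id, id, happly]
  have hTd (μ : ℝ) (hμ : HasEigenvalue T μ) : μ ≤ d := by
    obtain ⟨v, hv⟩ := hμ.exists_hasEigenvector
    exact heig μ v hv.2 ((happly μ v).mp (mem_eigenspace_iff.mp hv.1))
  have hquadT : y ⬝ᵥ M *ᵥ y = ⟪T y, y⟫_ℝ := by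
    rw [EuclideanSpace.inner_eq_star_dotProduct, star_trivial]; rfl
  have hsplit := hT.re_inner_le_starProjection_eigenvectorSpanAbove (c := (1 - γ) * d) hTd y
  rw [← hWT, RCLike.re_to_real, ← hquadT] at hsplit
  have hpyth : ‖W.starProjection y‖ ^ 2 + ‖y - W.starProjection y‖ ^ 2 = 1 := by
    rw [← W.starProjection_orthogonal_val, ← W.norm_sq_eq_add_norm_sq_starProjection, hy,
      one_pow]
  have hγ : 0 < γ := hε.trans hεγ
  have hresidual : ‖y - W.starProjection y‖ ^ 2 ≤ 2 * ε / γ := by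
    rw [le_div_iff₀ hγ]
    nlinarith
  simp only [Submodule.coe_orthogonalProjectionOnto_apply]
  exact ⟨Real.le_sqrt_of_sq_le hresidual,
    (Real.sqrt_le_left (norm_nonneg _)).mpr (by linarith)⟩

/-- Let `M` be a real symmetric matrix with all eigenvalues at most
`d > 0`, let `0 < 2ε < γ ≤ 1`, and let `W` be the span of the eigenvectors of `M` with
eigenvalue greater than `(1−γ)d`. If `y` is a unit vector with `yᵀ M y ≥ (1−2ε)d`,
then `‖y − P_W y‖ ≤ √(2ε/γ)` and `‖P_W y‖ ≥ √(1 − 2ε/γ)`. -/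
theorem close_to_top_eigenspace
    {N : ℕ} (M : Matrix (Fin N) (Fin N) ℝ) (hM : M.IsSymm)
    (d ε γ : ℝ) (hd : 0 < d) (hε : 0 < 2 * ε) (hεγ : 2 * ε < γ) (hγ : γ ≤ 1)
    (heig : ∀ (μ : ℝ) (v : EuclideanSpace ℝ (Fin N)),
        v ≠ 0 → M.mulVec v = μ • v → μ ≤ d)
    (W : Submodule ℝ (EuclideanSpace ℝ (Fin N)))
    (hW : W = Submodule.span ℝ {v : EuclideanSpace ℝ (Fin N) |
        v ≠ 0 ∧ ∃ μ : ℝ, (1 - γ) * d < μ ∧ M.mulVec v = μ • v})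
    (y : EuclideanSpace ℝ (Fin N)) (hy : ‖y‖ = 1)
    (hquad : (1 - 2 * ε) * d ≤ y ⬝ᵥ M.mulVec y) :
    ‖y - (Submodule.orthogonalProjectionOnto W y : EuclideanSpace ℝ (Fin N))‖ ≤ Real.sqrt (2 * ε / γ) ∧
    Real.sqrt (1 - 2 * ε / γ)
      ≤ ‖(Submodule.orthogonalProjectionOnto W y : EuclideanSpace ℝ (Fin N))‖ :=
  close_to_top_eigenspace_general M hM d ε γ hd hε hεγ heig W hW y hy hquad
end

section
/- Let a Unique Games instance on a d-regular weighted graph G on n vertices with label-extended adjacency matrix M be given, and suppose the labeling L : V → [k] satisfies constraints on edges of total weight at least (1−ε)·(nd/2). Let 0 < 2ε < γ, and let W be the span of the eigenvectors of M with eigenvalue greater than (1−γ)d. Then there exists a unit vector v ∈ W that can be written v = α·ỹ^L + β·y_⊥, where ỹ^L = y^L/√n, y_⊥ is a unit vector orthogonal to ỹ^L, α = ⟨v, ỹ^L⟩ ≥ √(1 − 2ε/γ) > 0, and |β| ≤ √(2ε/γ). -/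
/-!
Every satisfied constraint contributes its full weight to the quadratic form, so the Rayleigh
quotient of `ỹ^L` is at least `(1 - ε) d`, while `d ‖x‖² - ⟪x, M x⟫` is a nonnegative weighted sum
of squares `(x (u, i) - x (v, π u v i))²`, so every eigenvalue of `M` is at most `d`. Expanding
`ỹ^L` in an orthonormal eigenbasis, the mass `1 - t` it puts on eigenvalues `≤ (1 - γ) d` thus
satisfies `γ d (1 - t) ≤ ε d`. The normalized projection of `ỹ^L` onto `W` then has inner product
`√t ≥ √(1 - ε/γ)` with `ỹ^L`, and its component orthogonal to `ỹ^L` has length `√(1 - t)`.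
-/

open Matrix Finset RealInnerProductSpace

theorem EuclideanSpace.real_inner_eq_dotProduct {m : Type*} [Fintype m]
    (x y : EuclideanSpace ℝ m) : ⟪x, y⟫ = WithLp.ofLp x ⬝ᵥ WithLp.ofLp y :=
  dotProduct_comm _ _

section Spectral

variable {E : Type*} [NormedAddCommGroup E] [InnerProductSpace ℝ E] [FiniteDimensional ℝ E]
  {T : E →ₗ[ℝ] E}

theorem LinearMap.IsSymmetric.eigenvalues_le (hT : T.IsSymmetric) {n : ℕ}
    (hn : Module.finrank ℝ E = n) {d : ℝ} (hd : ∀ x, ⟪x, T x⟫ ≤ d * ‖x‖ ^ 2) (i : Fin n) :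
    hT.eigenvalues hn i ≤ d := by
  have h := hd (hT.eigenvectorBasis hn i)
  rwa [hT.apply_eigenvectorBasis, real_inner_smul_right, real_inner_self_eq_norm_sq,
    (hT.eigenvectorBasis hn).norm_eq_one, one_pow, mul_one, mul_one] at h

theorem LinearMap.IsSymmetric.inner_map_self_eq_sum (hT : T.IsSymmetric) {n : ℕ}
    (hn : Module.finrank ℝ E = n) (y : E) :
    ⟪y, T y⟫ = ∑ i, hT.eigenvalues hn i * ⟪hT.eigenvectorBasis hn i, y⟫ ^ 2 := by
  rw [← (hT.eigenvectorBasis hn).sum_inner_mul_inner]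
  refine Finset.sum_congr rfl fun i _ => ?_
  rw [← hT, hT.apply_eigenvectorBasis, RCLike.ofReal_real_eq_id, id_eq, real_inner_smul_left,
    real_inner_comm y]
  ring

theorem LinearMap.IsSymmetric.exists_mem_span_eigenvectors_spectral_gap (hT : T.IsSymmetric)
    {d : ℝ} (hd : ∀ x, ⟪x, T x⟫ ≤ d * ‖x‖ ^ 2) (c : ℝ) (y : E) :
    ∃ a ∈ Submodule.span ℝ {v | v ≠ 0 ∧ ∃ μ, c < μ ∧ T v = μ • v},
      ⟪a, y⟫ = ‖a‖ ^ 2 ∧ (d - c) * (‖y‖ ^ 2 - ‖a‖ ^ 2) ≤ d * ‖y‖ ^ 2 - ⟪y, T y⟫ := by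
  classical
  set e := hT.eigenvectorBasis rfl
  set μ := hT.eigenvalues rfl
  set S := univ.filter fun i => c < μ i
  set a := ∑ i ∈ S, ⟪e i, y⟫ • e i
  have ha : ‖a‖ ^ 2 = ∑ i ∈ S, ⟪e i, y⟫ ^ 2 := by
    rw [← real_inner_self_eq_norm_sq, e.orthonormal.inner_sum]
    simp [sq]
  have hy : ‖y‖ ^ 2 = ∑ i, ⟪e i, y⟫ ^ 2 := by
    simp [← e.sum_sq_norm_inner_right y]
  refine ⟨a, ?_, ?_, ?_⟩
  · refine Submodule.sum_mem _ fun i hi => Submodule.smul_mem _ _ (Submodule.subset_span ?_)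
    exact ⟨e.orthonormal.ne_zero i, μ i, (mem_filter.mp hi).2, hT.apply_eigenvectorBasis rfl i⟩
  · rw [ha, sum_inner]
    simp [real_inner_smul_left, sq]
  · calc (d - c) * (‖y‖ ^ 2 - ‖a‖ ^ 2) = ∑ i ∈ Sᶜ, (d - c) * ⟪e i, y⟫ ^ 2 := by
          rw [ha, hy, ← sum_compl_add_sum S, add_sub_cancel_right, mul_sum]
      _ ≤ ∑ i ∈ Sᶜ, (d - μ i) * ⟪e i, y⟫ ^ 2 :=
          sum_le_sum fun i hi => by gcongr; simpa [S] using hi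
      _ ≤ ∑ i, (d - μ i) * ⟪e i, y⟫ ^ 2 :=
          sum_le_sum_of_subset_of_nonneg (subset_univ _) fun i _ _ =>
            mul_nonneg (sub_nonneg.2 (hT.eigenvalues_le rfl hd i)) (sq_nonneg _)
      _ = d * ‖y‖ ^ 2 - ⟪y, T y⟫ := by
          rw [hy, hT.inner_map_self_eq_sum rfl, mul_sum, ← sum_sub_distrib]
          exact sum_congr rfl fun i _ => by ring

theorem LinearMap.IsSymmetric.exists_unit_mem_span_eigenvectors_sqrt_le_inner
    (hT : T.IsSymmetric) {d ε γ : ℝ} (hd : ∀ x, ⟪x, T x⟫ ≤ d * ‖x‖ ^ 2) (hd0 : 0 < d)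
    (hγ : 0 < γ) (hεγ : ε < γ) {y : E} (hy : ‖y‖ = 1) (hyT : (1 - ε) * d ≤ ⟪y, T y⟫) :
    ∃ v ∈ Submodule.span ℝ {v | v ≠ 0 ∧ ∃ μ, (1 - γ) * d < μ ∧ T v = μ • v},
      ‖v‖ = 1 ∧ √(1 - ε / γ) ≤ ⟪v, y⟫ := by
  obtain ⟨a, haW, hay, hgap⟩ := hT.exists_mem_span_eigenvectors_spectral_gap hd ((1 - γ) * d) y
  rw [hy, one_pow] at hgap
  have ha_sq : 1 - ε / γ ≤ ‖a‖ ^ 2 := by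
    have h : γ * (1 - ‖a‖ ^ 2) ≤ ε := le_of_mul_le_mul_right (by nlinarith) hd0
    linarith [(le_div_iff₀' hγ).mpr h]
  have ha0 : a ≠ 0 := by
    rintro rfl
    rw [norm_zero, zero_pow two_ne_zero, sub_nonpos, one_le_div hγ] at ha_sq
    linarith
  refine ⟨‖a‖⁻¹ • a, Submodule.smul_mem _ _ haW, norm_smul_inv_norm ha0, ?_⟩
  rw [real_inner_smul_left, hay, sq, inv_mul_cancel_left₀ (norm_ne_zero_iff.mpr ha0),
    ← Real.sqrt_sq (norm_nonneg a)]
  exact Real.sqrt_le_sqrt ha_sq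

end Spectral

section Orthogonal

variable {E : Type*} [NormedAddCommGroup E] [InnerProductSpace ℝ E]

theorem Submodule.exists_norm_eq_one_smul_of_mem {K : Submodule ℝ E} (hK : K ≠ ⊥) {x : E}
    (hx : x ∈ K) : ∃ u ∈ K, ‖u‖ = 1 ∧ x = ‖x‖ • u := by
  by_cases hx0 : x = 0
  · obtain ⟨z, hzK, hz⟩ := K.ne_bot_iff.mp hK
    exact ⟨‖z‖⁻¹ • z, K.smul_mem _ hzK, norm_smul_inv_norm hz, by simp [hx0]⟩
  · exact ⟨‖x‖⁻¹ • x, K.smul_mem _ hx, norm_smul_inv_norm hx0,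
      (smul_inv_smul₀ (norm_ne_zero_iff.mpr hx0) x).symm⟩

theorem orthogonal_span_singleton_ne_bot [FiniteDimensional ℝ E]
    (hE : 1 < Module.finrank ℝ E) {y : E} (hy : y ≠ 0) : (ℝ ∙ y)ᗮ ≠ ⊥ := by
  rw [Ne, Submodule.orthogonal_eq_bot_iff]
  intro htop
  have h := finrank_span_singleton (K := ℝ) hy
  rw [htop, finrank_top] at h
  omega

theorem exists_unit_orthogonal_decomposition [FiniteDimensional ℝ E]
    (hE : 1 < Module.finrank ℝ E) {y : E} (hy : ‖y‖ = 1) (v : E) :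
    ∃ (β : ℝ) (yperp : E), ‖yperp‖ = 1 ∧ ⟪yperp, y⟫ = 0 ∧
      v = ⟪v, y⟫ • y + β • yperp ∧ β ^ 2 = ‖v‖ ^ 2 - ⟪v, y⟫ ^ 2 := by
  have hy0 : y ≠ 0 := norm_ne_zero_iff.mp (by rw [hy]; exact one_ne_zero)
  set r := v - ⟪v, y⟫ • y
  have hr : r ∈ (ℝ ∙ y)ᗮ := by
    rw [Submodule.mem_orthogonal_singleton_iff_inner_right, inner_sub_right,
      real_inner_smul_right, real_inner_self_eq_norm_sq, hy, real_inner_comm]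
    ring
  obtain ⟨u, hu, hu1, hru⟩ :=
    Submodule.exists_norm_eq_one_smul_of_mem (orthogonal_span_singleton_ne_bot hE hy0) hr
  refine ⟨‖r‖, u, hu1, Submodule.mem_orthogonal_singleton_iff_inner_left.mp hu, ?_, ?_⟩
  · rw [← hru, add_sub_cancel]
  · rw [norm_sub_sq_real, real_inner_smul_right, norm_smul, hy, Real.norm_eq_abs, mul_pow,
      sq_abs]
    ring

end Orthogonal

section LabelExtended

variable {V ι : Type*} [DecidableEq ι]

def labelExtendedMatrix (w : V → V → ℝ) (π : V → V → Equiv.Perm ι) :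
    Matrix (V × ι) (V × ι) ℝ :=
  fun p q => w p.1 q.1 * if π p.1 q.1 p.2 = q.2 then 1 else 0

def labelingVector (L : V → ι) : V × ι → ℝ :=
  fun p => if p.2 = L p.1 then 1 else 0

variable {w : V → V → ℝ} {π : V → V → Equiv.Perm ι}

theorem labelExtendedMatrix_isHermitian (hw : ∀ u v, w u v = w v u)
    (hπ : ∀ u v, π v u = (π u v)⁻¹) : (labelExtendedMatrix w π).IsHermitian := by
  ext p q
  rw [conjTranspose_apply, star_trivial]
  simp only [labelExtendedMatrix, hw q.1, hπ p.1, Equiv.Perm.inv_eq_iff_eq, eq_comm (a := q.2)]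

variable [Fintype V] [Fintype ι]

theorem dotProduct_mulVec_labelExtendedMatrix (x : V × ι → ℝ) :
    x ⬝ᵥ labelExtendedMatrix w π *ᵥ x = ∑ u, ∑ v, w u v * ∑ i, x (u, i) * x (v, π u v i) := by
  simp only [dotProduct, mulVec, Fintype.sum_prod_type, labelExtendedMatrix, mul_ite, mul_one,
    mul_zero, ite_mul, zero_mul, sum_ite_eq, mem_univ, if_true, mul_sum]
  exact sum_congr rfl fun u _ => sum_comm.trans <| sum_congr rfl fun v _ =>
    sum_congr rfl fun i _ => by ring

theorem dotProduct_mulVec_labelExtendedMatrix_le (hw : ∀ u v, w u v = w v u)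
    (hw_nonneg : ∀ u v, 0 ≤ w u v) {d : ℝ} (hreg : ∀ u, ∑ v, w u v = d) (x : V × ι → ℝ) :
    x ⬝ᵥ labelExtendedMatrix w π *ᵥ x ≤ d * (x ⬝ᵥ x) := by
  have hxx : d * (x ⬝ᵥ x) = ∑ u, d * ∑ i, x (u, i) ^ 2 := by
    simp [dotProduct, Fintype.sum_prod_type, sq, mul_sum]
  have hleft : ∑ u, ∑ v, w u v * ∑ i, x (u, i) ^ 2 = d * (x ⬝ᵥ x) := by
    simp_rw [← sum_mul, hreg, hxx]
  have hright : ∑ u, ∑ v, w u v * ∑ i, x (v, π u v i) ^ 2 = d * (x ⬝ᵥ x) := by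
    have hperm (u v : V) : ∑ i, x (v, π u v i) ^ 2 = ∑ i, x (v, i) ^ 2 :=
      Equiv.sum_comp (π u v) fun i => x (v, i) ^ 2
    simp_rw [hperm]
    rw [sum_comm]
    have hcol (v : V) : ∑ u, w u v = d := (sum_congr rfl fun u _ => hw u v).trans (hreg v)
    simp_rw [← sum_mul, hcol, hxx]
  have hsq : 0 ≤ ∑ u, ∑ v, w u v * ∑ i, (x (u, i) - x (v, π u v i)) ^ 2 :=
    sum_nonneg fun u _ => sum_nonneg fun v _ =>
      mul_nonneg (hw_nonneg u v) (sum_nonneg fun i _ => sq_nonneg _)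
  have hexpand : ∑ u, ∑ v, w u v * ∑ i, (x (u, i) - x (v, π u v i)) ^ 2 =
      ∑ u, ∑ v, w u v * ∑ i, x (u, i) ^ 2 + ∑ u, ∑ v, w u v * ∑ i, x (v, π u v i) ^ 2
        - 2 * ∑ u, ∑ v, w u v * ∑ i, x (u, i) * x (v, π u v i) := by
    simp only [sub_sq, sum_add_distrib, sum_sub_distrib, mul_add, mul_sub, mul_sum,
      mul_assoc, mul_left_comm _ (2 : ℝ)]
    ring
  rw [dotProduct_mulVec_labelExtendedMatrix]
  linarith

variable (π) in
theorem labelingVector_dotProduct_mulVec (L : V → ι) :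
    labelingVector L ⬝ᵥ labelExtendedMatrix w π *ᵥ labelingVector L =
      ∑ u, ∑ v, if π u v (L u) = L v then w u v else 0 := by
  rw [dotProduct_mulVec_labelExtendedMatrix]
  refine sum_congr rfl fun u _ => sum_congr rfl fun v _ => ?_
  rw [sum_eq_single (L u) (fun i _ hi => by simp [labelingVector, hi]) (by simp)]
  simp [labelingVector]

theorem labelingVector_dotProduct_self (L : V → ι) :
    labelingVector L ⬝ᵥ labelingVector L = Fintype.card V := by
  simp [dotProduct, labelingVector, Fintype.sum_prod_type]

noncomputable def normalizedLabelingVector (L : V → ι) : EuclideanSpace ℝ (V × ι) :=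
  (√(Fintype.card V))⁻¹ • WithLp.toLp 2 (labelingVector L)

theorem norm_normalizedLabelingVector [Nonempty V] (L : V → ι) :
    ‖normalizedLabelingVector L‖ = 1 := by
  have hV : (0 : ℝ) < Fintype.card V := Nat.cast_pos.mpr Fintype.card_pos
  rw [← pow_eq_one_iff_of_nonneg (norm_nonneg _) two_ne_zero, ← real_inner_self_eq_norm_sq,
    normalizedLabelingVector, real_inner_smul_left, real_inner_smul_right,
    EuclideanSpace.real_inner_eq_dotProduct, labelingVector_dotProduct_self, ← mul_assoc,
    ← mul_inv, Real.mul_self_sqrt hV.le, inv_mul_cancel₀ hV.ne']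

variable (π) in
theorem inner_normalizedLabelingVector_toEuclideanLin [DecidableEq V] (L : V → ι) :
    ⟪normalizedLabelingVector L,
        toEuclideanLin (labelExtendedMatrix w π) (normalizedLabelingVector L)⟫ =
      (∑ u, ∑ v, if π u v (L u) = L v then w u v else 0) / Fintype.card V := by
  rw [normalizedLabelingVector, map_smul, real_inner_smul_left, real_inner_smul_right,
    EuclideanSpace.real_inner_eq_dotProduct, ← mul_assoc, ← mul_inv,
    Real.mul_self_sqrt (Nat.cast_nonneg _), inv_mul_eq_div]
  exact congrArg (· / _) (labelingVector_dotProduct_mulVec π L)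

theorem real_inner_toEuclideanLin_labelExtendedMatrix_le [DecidableEq V]
    (hw : ∀ u v, w u v = w v u) (hw_nonneg : ∀ u v, 0 ≤ w u v) {d : ℝ}
    (hreg : ∀ u, ∑ v, w u v = d) (x : EuclideanSpace ℝ (V × ι)) :
    ⟪x, toEuclideanLin (labelExtendedMatrix w π) x⟫ ≤ d * ‖x‖ ^ 2 := by
  rw [← real_inner_self_eq_norm_sq, EuclideanSpace.real_inner_eq_dotProduct,
    EuclideanSpace.real_inner_eq_dotProduct]
  exact dotProduct_mulVec_labelExtendedMatrix_le hw hw_nonneg hreg _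

end LabelExtended

/-- For a `(1−ε)`-satisfiable Unique Games instance on a `d`-regular
graph, with `W` the span of eigenvectors of the label-extended matrix `M` with
eigenvalue greater than `(1−γ)d` (where `0 < 2ε < γ`), there is a unit vector `v ∈ W`
of the form `v = α ỹ^L + β y_⊥` with `α = ⟨v, ỹ^L⟩ ≥ √(1−2ε/γ) > 0`, `|β| ≤ √(2ε/γ)`
and `y_⊥` a unit vector orthogonal to `ỹ^L`. -/
theorem exists_nice_vector_in_top_eigenspace
    {n k : ℕ} (hn : 0 < n) (hdim : 1 < n * k)
    (w : Fin n → Fin n → ℝ) (d ε γ : ℝ)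
    (hd : 0 < d) (hε : 0 < 2 * ε) (hεγ : 2 * ε < γ)
    (π : Fin n → Fin n → Equiv.Perm (Fin k))
    (hw_symm : ∀ u v, w u v = w v u)
    (hw_nonneg : ∀ u v, 0 ≤ w u v)
    (hπ_symm : ∀ u v, π v u = (π u v)⁻¹)
    (hreg : ∀ u, ∑ v, w u v = d)
    (M : Matrix (Fin n × Fin k) (Fin n × Fin k) ℝ)
    (hM : ∀ p q, M p q = w p.1 q.1 * (if π p.1 q.1 p.2 = q.2 then 1 else 0))
    (L : Fin n → Fin k)
    (hsat : (1 - ε) * (n * d / 2)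
        ≤ (1 / 2) * ∑ u, ∑ v, (if π u v (L u) = L v then w u v else 0))
    (ytil : EuclideanSpace ℝ (Fin n × Fin k))
    (hytil : ∀ p, ytil p = if p.2 = L p.1 then 1 / Real.sqrt n else 0)
    (W : Submodule ℝ (EuclideanSpace ℝ (Fin n × Fin k)))
    (hW : W = Submodule.span ℝ {v : EuclideanSpace ℝ (Fin n × Fin k) |
        v ≠ 0 ∧ ∃ μ : ℝ, (1 - γ) * d < μ ∧ M.mulVec v = μ • v}) :
    ∃ v ∈ W, ‖v‖ = 1 ∧
      ∃ (β : ℝ) (yperp : EuclideanSpace ℝ (Fin n × Fin k)),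
        ‖yperp‖ = 1 ∧ ⟪yperp, ytil⟫ = 0 ∧
        v = ⟪v, ytil⟫ • ytil + β • yperp ∧
        Real.sqrt (1 - 2 * ε / γ) ≤ ⟪v, ytil⟫ ∧
        |β| ≤ Real.sqrt (2 * ε / γ) := by
  obtain rfl : M = labelExtendedMatrix w π := Matrix.ext hM
  obtain rfl : ytil = normalizedLabelingVector L := by
    ext p
    simp [hytil, normalizedLabelingVector, labelingVector]
  subst hW
  have : Nonempty (Fin n) := ⟨⟨0, hn⟩⟩
  have hy := norm_normalizedLabelingVector L
  have hT : (toEuclideanLin (labelExtendedMatrix w π)).IsSymmetric :=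
    isSymmetric_toEuclideanLin_iff.mpr (labelExtendedMatrix_isHermitian hw_symm hπ_symm)
  have hyT : (1 - ε) * d ≤ ⟪normalizedLabelingVector L,
      toEuclideanLin (labelExtendedMatrix w π) (normalizedLabelingVector L)⟫ := by
    rw [inner_normalizedLabelingVector_toEuclideanLin, Fintype.card_fin,
      le_div_iff₀ (Nat.cast_pos.mpr hn)]
    linarith
  have hγ : 0 < γ := hε.trans hεγ
  obtain ⟨v, hvW, hv, hvy⟩ := hT.exists_unit_mem_span_eigenvectors_sqrt_le_inner
    (real_inner_toEuclideanLin_labelExtendedMatrix_le hw_symm hw_nonneg hreg) hd hγ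
    (by linarith) hy hyT
  have hE : 1 < Module.finrank ℝ (EuclideanSpace ℝ (Fin n × Fin k)) := by
    simpa [finrank_euclideanSpace] using hdim
  obtain ⟨β, yperp, hyperp, hperp, hdecomp, hβ⟩ := exists_unit_orthogonal_decomposition hE hy v
  have hεγ' : ε / γ ≤ 2 * ε / γ := div_le_div_of_nonneg_right (by linarith) hγ.le
  refine ⟨v, Submodule.span_mono ?_ hvW, hv, β, yperp, hyperp, hperp, hdecomp,
    (Real.sqrt_le_sqrt (by linarith)).trans hvy, Real.abs_le_sqrt ?_⟩
  · rintro x ⟨hx0, μ, hμ, hx⟩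
    exact ⟨hx0, μ, hμ, congrArg WithLp.ofLp hx⟩
  · rw [hβ, hv, one_pow]
    linarith [(Real.sqrt_le_iff.mp hvy).2]
end

section
/- Let L : V → [k] be a labeling of n vertices and let ỹ^L ∈ ℝ^{nk} be its normalized characteristic vector (with entries 1/√n at positions (u, L(u)) and 0 elsewhere). Suppose x ∈ ℝ^{nk} can be written x = α·ỹ^L + β·y_⊥, where α > 0 and y_⊥ is a unit vector orthogonal to ỹ^L. Then the number of vertices u for which there exists some j ≠ L(u) with x(u,j) ≥ x(u, L(u)) is at most (2β²/α²)·n. In particular, in at least (1 − 2β²/α²)·n of the n blocks, the coordinate x(u, L(u)) is the strict maximum of the block (x(u,1), …, x(u,k)). -/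
open Finset RealInnerProductSpace

/-!
Write `a = y_⊥(u, L u)` and `b = y_⊥(u, j)`. If `x(u, L u) ≤ x(u, j)` for some `j ≠ L u`, then
`α / √n ≤ β (b - a)`, so `α² / n ≤ β² (b - a)² ≤ 2 β² (a² + b²) ≤ 2 β² ∑ₗ y_⊥(u, l)²`. Summing
over these blocks, which are disjoint, and using `‖y_⊥‖ = 1` bounds their number by `2 β² n / α²`.
-/

section Blocks

variable {ι κ : Type*}

theorem sum_sum_block_sq_le_norm_sq [Fintype ι] [Fintype κ] (y : EuclideanSpace ℝ (ι × κ))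
    (S : Finset ι) : ∑ u ∈ S, ∑ j, y (u, j) ^ 2 ≤ ‖y‖ ^ 2 := by
  rw [EuclideanSpace.real_norm_sq_eq, Fintype.sum_prod_type]
  exact Finset.sum_le_sum_of_subset_of_nonneg (Finset.subset_univ S)
    fun u _ _ => Finset.sum_nonneg fun j _ => sq_nonneg _

variable [Fintype κ] [DecidableEq κ]

theorem sq_sub_le_two_mul_block_sum_sq (y : EuclideanSpace ℝ (ι × κ)) (u : ι) {i j : κ}
    (hij : j ≠ i) : (y (u, j) - y (u, i)) ^ 2 ≤ 2 * ∑ l, y (u, l) ^ 2 := by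
  have hpair : y (u, j) ^ 2 + y (u, i) ^ 2 ≤ ∑ l, y (u, l) ^ 2 := by
    rw [← Finset.sum_pair (f := fun l => y (u, l) ^ 2) hij]
    exact Finset.sum_le_sum_of_subset_of_nonneg (Finset.subset_univ _)
      fun l _ _ => sq_nonneg _
  nlinarith [sq_nonneg (y (u, j) + y (u, i))]

variable (L : ι → κ) {c α β : ℝ} {ytil y : EuclideanSpace ℝ (ι × κ)}

theorem sq_mul_le_of_label_not_strict_max (hαc : 0 ≤ α * c)
    (hytil : ∀ p, ytil p = if p.2 = L p.1 then c else 0) {u : ι} {j : κ} (hj : j ≠ L u)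
    (hle : (α • ytil + β • y) (u, L u) ≤ (α • ytil + β • y) (u, j)) :
    (α * c) ^ 2 ≤ 2 * β ^ 2 * ∑ l, y (u, l) ^ 2 := by
  simp only [PiLp.add_apply, PiLp.smul_apply, smul_eq_mul, hytil, if_pos, if_neg hj] at hle
  have hgap : α * c ≤ β * (y (u, j) - y (u, L u)) := by linarith
  calc (α * c) ^ 2 ≤ β ^ 2 * (y (u, j) - y (u, L u)) ^ 2 := by
        rw [← mul_pow]; exact pow_le_pow_left₀ hαc hgap 2
    _ ≤ β ^ 2 * (2 * ∑ l, y (u, l) ^ 2) :=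
        mul_le_mul_of_nonneg_left (sq_sub_le_two_mul_block_sum_sq y u hj) (sq_nonneg β)
    _ = 2 * β ^ 2 * ∑ l, y (u, l) ^ 2 := by ring

theorem card_label_not_strict_max_mul_le [Fintype ι] (hαc : 0 ≤ α * c)
    (hytil : ∀ p, ytil p = if p.2 = L p.1 then c else 0) :
    (Nat.card {u // ∃ j, j ≠ L u ∧
        (α • ytil + β • y) (u, L u) ≤ (α • ytil + β • y) (u, j)} : ℝ) * (α * c) ^ 2
      ≤ 2 * β ^ 2 * ‖y‖ ^ 2 := by
  classical
  rw [Nat.card_eq_fintype_card, Fintype.card_subtype]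
  set S := Finset.univ.filter
    fun u => ∃ j, j ≠ L u ∧ (α • ytil + β • y) (u, L u) ≤ (α • ytil + β • y) (u, j)
  calc (#S : ℝ) * (α * c) ^ 2 = ∑ _u ∈ S, (α * c) ^ 2 := by
        rw [Finset.sum_const, nsmul_eq_mul]
    _ ≤ ∑ u ∈ S, 2 * β ^ 2 * ∑ l, y (u, l) ^ 2 := Finset.sum_le_sum fun u hu => by
        obtain ⟨j, hj, hle⟩ := (Finset.mem_filter.1 hu).2
        exact sq_mul_le_of_label_not_strict_max L hαc hytil hj hle
    _ = 2 * β ^ 2 * ∑ u ∈ S, ∑ l, y (u, l) ^ 2 := (Finset.mul_sum _ _ _).symm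
    _ ≤ 2 * β ^ 2 * ‖y‖ ^ 2 :=
        mul_le_mul_of_nonneg_left (sum_sum_block_sq_le_norm_sq y S) (by positivity)

end Blocks

theorem card_strict_max_add_card_not_strict_max {ι κ : Type*} [Fintype ι] (L : ι → κ)
    (f : ι × κ → ℝ) :
    Nat.card {u // ∀ j, j ≠ L u → f (u, j) < f (u, L u)}
      + Nat.card {u // ∃ j, j ≠ L u ∧ f (u, L u) ≤ f (u, j)} = Fintype.card ι := by
  classical
  have hcompl : {u // ∀ j, j ≠ L u → f (u, j) < f (u, L u)}
      ≃ {u // ¬ ∃ j, j ≠ L u ∧ f (u, L u) ≤ f (u, j)} :=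
    Equiv.subtypeEquivRight fun u => by push Not; rfl
  rw [Nat.card_congr hcompl, Nat.card_eq_fintype_card, Nat.card_eq_fintype_card,
    Fintype.card_subtype_compl]
  exact Nat.sub_add_cancel (Fintype.card_subtype_le _)

theorem decoding_recovers_most_labels_general
    {n k : ℕ} (L : Fin n → Fin k)
    (ytil : EuclideanSpace ℝ (Fin n × Fin k))
    (hytil : ∀ p, ytil p = if p.2 = L p.1 then 1 / Real.sqrt n else 0)
    (α β : ℝ) (hα : 0 < α)
    (yperp : EuclideanSpace ℝ (Fin n × Fin k))
    (hyperp : ‖yperp‖ = 1)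
    (x : EuclideanSpace ℝ (Fin n × Fin k))
    (hx : x = α • ytil + β • yperp) :
    (Nat.card {u : Fin n // ∃ j : Fin k, j ≠ L u ∧ x (u, L u) ≤ x (u, j)} : ℝ)
        ≤ (2 * β ^ 2 / α ^ 2) * n ∧
    (1 - 2 * β ^ 2 / α ^ 2) * n
        ≤ (Nat.card {u : Fin n // ∀ j : Fin k, j ≠ L u → x (u, j) < x (u, L u)} : ℝ) := by
  rcases n.eq_zero_or_pos with rfl | hn
  · simp
  subst hx
  have hn' : (0 : ℝ) < n := Nat.cast_pos.2 hn
  have hbad := card_label_not_strict_max_mul_le L (β := β) (y := yperp)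
    (mul_nonneg hα.le (by positivity)) hytil
  rw [hyperp, one_pow, mul_one, mul_one_div, div_pow, Real.sq_sqrt hn'.le,
    ← le_div_iff₀ (by positivity), div_div_eq_mul_div, mul_div_right_comm] at hbad
  have hsplit := congrArg (Nat.cast : ℕ → ℝ)
    (card_strict_max_add_card_not_strict_max L (α • ytil + β • yperp).ofLp)
  push_cast [Fintype.card_fin] at hsplit
  exact ⟨hbad, by linarith⟩

/-- If `x = α ỹ^L + β y_⊥` with `α > 0` and `y_⊥` a unit vector
orthogonal to the normalized characteristic vector `ỹ^L`, then the number of blocks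
`u` where the coordinate `x(u, L(u))` fails to be the strict maximum is at most
`(2β²/α²)·n`; in particular, in at least `(1 − 2β²/α²)·n` blocks it is the strict
maximum. -/
theorem decoding_recovers_most_labels
    {n k : ℕ} (L : Fin n → Fin k)
    (ytil : EuclideanSpace ℝ (Fin n × Fin k))
    (hytil : ∀ p, ytil p = if p.2 = L p.1 then 1 / Real.sqrt n else 0)
    (α β : ℝ) (hα : 0 < α)
    (yperp : EuclideanSpace ℝ (Fin n × Fin k))
    (hyperp : ‖yperp‖ = 1) (horth : ⟪yperp, ytil⟫ = 0)
    (x : EuclideanSpace ℝ (Fin n × Fin k))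
    (hx : x = α • ytil + β • yperp) :
    (Nat.card {u : Fin n // ∃ j : Fin k, j ≠ L u ∧ x (u, L u) ≤ x (u, j)} : ℝ)
        ≤ (2 * β ^ 2 / α ^ 2) * n ∧
    (1 - 2 * β ^ 2 / α ^ 2) * n
        ≤ (Nat.card {u : Fin n // ∀ j : Fin k, j ≠ L u → x (u, j) < x (u, L u)} : ℝ) :=
  decoding_recovers_most_labels_general L ytil hytil α β hα yperp hyperp x hx
end

section
/- Let M and M̃ be N×N real symmetric matrices. Fix a threshold μ ∈ ℝ, let Y be the span of the eigenvectors of M̃ with eigenvalue at least μ (assume Y ≠ ℝ^N), let λ_s be the largest eigenvalue of M̃ that is strictly less than μ, and let P_Y be the orthogonal projection onto Y. If w is a unit eigenvector of M with eigenvalue λ > λ_s, then ‖w − P_Y w‖ ≤ ‖(M̃ − M)w‖ / (λ − λ_s). -/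
/-!
Let `z = w - P_Y w ∈ Yᗮ`. Every eigenvector of `M̃` with eigenvalue above `λ_s` lies in `Y`, so
expanding `z` in an orthonormal eigenbasis of `M̃` gives `⟪M̃ z, z⟫ ≤ λ_s ‖z‖²`. As `Y` is
`M̃`-invariant and `M̃` is symmetric, `⟪z, M̃ w⟫ = ⟪M̃ z, z⟫` and `⟪z, w⟫ = ‖z‖²`; with `M w = λ w`
this gives `⟪z, (M̃ - M) w⟫ ≤ -(λ - λ_s) ‖z‖²`, and Cauchy–Schwarz finishes.
-/

open Matrix Finset Module.End

open scoped RealInnerProductSpace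

theorem Submodule.span_le_comap_of_forall_apply_eq_smul {R M : Type*} [Semiring R]
    [AddCommMonoid M] [Module R M] {f : M →ₗ[R] M} {S : Set M}
    (hS : ∀ v ∈ S, ∃ ν : R, f v = ν • v) : span R S ≤ (span R S).comap f :=
  span_le.mpr fun v hv => by
    obtain ⟨ν, hν⟩ := hS v hv
    simpa [hν] using smul_mem _ ν (subset_span hv)

theorem Matrix.hasEigenvector_toEuclideanLin_iff {𝕜 n : Type*} [RCLike 𝕜] [Fintype n]
    [DecidableEq n] {A : Matrix n n 𝕜} {ν : 𝕜} {v : EuclideanSpace 𝕜 n} :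
    HasEigenvector (toEuclideanLin A) ν v ↔ v ≠ 0 ∧ A *ᵥ v = ν • v := by
  rw [hasEigenvector_iff, mem_eigenspace_iff, and_comm, ← (WithLp.ofLp_injective 2).eq_iff]
  rfl

namespace LinearMap.IsSymmetric

variable {E : Type*} [NormedAddCommGroup E] [InnerProductSpace ℝ E] [FiniteDimensional ℝ E]
  {T : E →ₗ[ℝ] E}

theorem inner_map_self_le_of_forall_hasEigenvector (hT : T.IsSymmetric) {c : ℝ} {z : E}
    (hz : ∀ ν v, HasEigenvector T ν v → c < ν → ⟪v, z⟫ = 0) : ⟪T z, z⟫ ≤ c * ‖z‖ ^ 2 := by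
  obtain ⟨e, d, he⟩ : ∃ (e : OrthonormalBasis (Fin (Module.finrank ℝ E)) ℝ E) (d : _ → ℝ),
      ∀ i, HasEigenvector T (d i) (e i) :=
    ⟨_, _, hT.hasEigenvector_eigenvectorBasis rfl⟩
  have hterm : ∀ i, ⟪T z, e i⟫ * ⟪e i, z⟫ ≤ c * (⟪z, e i⟫ * ⟪e i, z⟫) := by
    intro i
    rw [hT z, (he i).apply_eq_smul, real_inner_smul_right, real_inner_comm (e i) z, mul_assoc]
    rcases le_or_gt (d i) c with h | h
    · exact mul_le_mul_of_nonneg_right h (mul_self_nonneg _)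
    · simp [hz _ _ (he i) h]
  calc ⟪T z, z⟫ = ∑ i, ⟪T z, e i⟫ * ⟪e i, z⟫ := (e.sum_inner_mul_inner _ _).symm
    _ ≤ ∑ i, c * (⟪z, e i⟫ * ⟪e i, z⟫) := sum_le_sum fun i _ => hterm i
    _ = c * ‖z‖ ^ 2 := by rw [← mul_sum, e.sum_inner_mul_inner, real_inner_self_eq_norm_sq]

theorem norm_sub_starProjection_le (hT : T.IsSymmetric) {Y : Submodule ℝ E}
    (hYT : Y ≤ Y.comap T) {c : ℝ} (hc : ∀ ν v, HasEigenvector T ν v → c < ν → v ∈ Y)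
    (w : E) {lam : ℝ} (hlam : c < lam) :
    ‖w - Y.starProjection w‖ ≤ ‖T w - lam • w‖ / (lam - c) := by
  set P := Y.starProjection w
  set z := w - P
  have hz : z ∈ Yᗮ := Y.sub_starProjection_mem_orthogonal w
  have hP : P ∈ Y := Y.starProjection_apply_mem w
  have hquad : ⟪T z, z⟫ ≤ c * ‖z‖ ^ 2 := hT.inner_map_self_le_of_forall_hasEigenvector
    fun ν v hv hν => Submodule.inner_right_of_mem_orthogonal (hc ν v hv hν) hz
  have hTP : T P ∈ Y := hYT hP
  have hTzP : ⟪T z, P⟫ = 0 := by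
    rw [hT]; exact Submodule.inner_left_of_mem_orthogonal hTP hz
  have hzP : ⟪z, P⟫ = 0 := Submodule.inner_left_of_mem_orthogonal hP hz
  have hw : w = z + P := (sub_add_cancel w P).symm
  have hgap : (lam - c) * ‖z‖ ^ 2 ≤ -⟪z, T w - lam • w⟫ := by
    have : ⟪z, T w - lam • w⟫ = ⟪T z, z⟫ - lam * ‖z‖ ^ 2 := by
      rw [inner_sub_right, real_inner_smul_right, ← hT z w, hw, inner_add_right, inner_add_right,
        hTzP, hzP, real_inner_self_eq_norm_sq]
      ring
    linarith
  have hCS : -⟪z, T w - lam • w⟫ ≤ ‖z‖ * ‖T w - lam • w‖ :=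
    (neg_le_abs _).trans (abs_real_inner_le_norm _ _)
  rw [le_div_iff₀ (sub_pos.mpr hlam)]
  rcases (norm_nonneg z).eq_or_lt with h0 | hpos
  · simp [← h0]
  · refine le_of_mul_le_mul_left ?_ hpos
    nlinarith

end LinearMap.IsSymmetric

theorem sin_theta_eigenspace_perturbation_general
    {N : ℕ} (M Mt : Matrix (Fin N) (Fin N) ℝ)
    (hMt : Mt.IsSymm) (μ : ℝ)
    (Y : Submodule ℝ (EuclideanSpace ℝ (Fin N)))
    (hY : Y = Submodule.span ℝ {v : EuclideanSpace ℝ (Fin N) |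
        v ≠ 0 ∧ ∃ ν : ℝ, μ ≤ ν ∧ Mt.mulVec v = ν • v})
    (lam_s : ℝ)
    (hs_max : ∀ (ν : ℝ) (v : EuclideanSpace ℝ (Fin N)),
        v ≠ 0 → Mt.mulVec v = ν • v → ν < μ → ν ≤ lam_s)
    (w : EuclideanSpace ℝ (Fin N)) (lam : ℝ)
    (hweig : M.mulVec w = lam • w) (hlam : lam_s < lam) :
    ‖w - (Y.orthogonalProjectionOnto w : EuclideanSpace ℝ (Fin N))‖
      ≤ ‖(show EuclideanSpace ℝ (Fin N) from WithLp.toLp 2 ((Mt - M).mulVec w))‖ / (lam - lam_s) := by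
  set T := toEuclideanLin Mt
  have hT : T.IsSymmetric := isSymmetric_toEuclideanLin_iff.mpr (isHermitian_iff_isSymm.mpr hMt)
  have hYT : Y ≤ Y.comap T := hY ▸ Submodule.span_le_comap_of_forall_apply_eq_smul
    fun v ⟨_, ν, _, hv⟩ => ⟨ν, congrArg (WithLp.toLp 2) hv⟩
  have hc : ∀ ν v, HasEigenvector T ν v → lam_s < ν → v ∈ Y := by
    intro ν v hv hν
    obtain ⟨hv0, hTv⟩ := hasEigenvector_toEuclideanLin_iff.mp hv
    refine hY ▸ Submodule.subset_span ⟨hv0, ν, ?_, hTv⟩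
    by_contra! hνμ
    exact hν.not_ge (hs_max ν v hv0 hTv hνμ)
  have hu : WithLp.toLp 2 ((Mt - M) *ᵥ w) = T w - lam • w :=
    congrArg (WithLp.toLp 2) (by rw [sub_mulVec, hweig]; rfl)
  simpa [hu] using hT.norm_sub_starProjection_le hYT hc w hlam

/-- sin-θ / Davis–Kahan type bound. Let `M`, `M̃` be symmetric, let
`Y` be the span of eigenvectors of `M̃` with eigenvalue at least `μ` (with `Y ≠ ⊤`),
and let `λ_s` be the largest eigenvalue of `M̃` strictly below `μ`. If `w` is a unit
eigenvector of `M` with eigenvalue `λ > λ_s`, then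
`‖w − P_Y w‖ ≤ ‖(M̃ − M)w‖ / (λ − λ_s)`. -/
theorem sin_theta_eigenspace_perturbation
    {N : ℕ} (M Mt : Matrix (Fin N) (Fin N) ℝ)
    (hM : M.IsSymm) (hMt : Mt.IsSymm) (μ : ℝ)
    (Y : Submodule ℝ (EuclideanSpace ℝ (Fin N)))
    (hY : Y = Submodule.span ℝ {v : EuclideanSpace ℝ (Fin N) |
        v ≠ 0 ∧ ∃ ν : ℝ, μ ≤ ν ∧ Mt.mulVec v = ν • v})
    (hYne : Y ≠ ⊤)
    (lam_s : ℝ)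
    (hs_eig : ∃ v : EuclideanSpace ℝ (Fin N), v ≠ 0 ∧ Mt.mulVec v = lam_s • v)
    (hs_lt : lam_s < μ)
    (hs_max : ∀ (ν : ℝ) (v : EuclideanSpace ℝ (Fin N)),
        v ≠ 0 → Mt.mulVec v = ν • v → ν < μ → ν ≤ lam_s)
    (w : EuclideanSpace ℝ (Fin N)) (hw : ‖w‖ = 1) (lam : ℝ)
    (hweig : M.mulVec w = lam • w) (hlam : lam_s < lam) :
    ‖w - (Y.orthogonalProjectionOnto w : EuclideanSpace ℝ (Fin N))‖
      ≤ ‖(show EuclideanSpace ℝ (Fin N) from WithLp.toLp 2 ((Mt - M).mulVec w))‖ / (lam - lam_s) :=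
  sin_theta_eigenspace_perturbation_general M Mt hMt μ Y hY lam_s hs_max w lam hweig hlam
end

section
/- Let a Unique Games instance on a d-regular weighted graph G on n vertices (adjacency matrix A, so all eigenvalues of A are at most d) have label-extended adjacency matrix M. Let 0 < θ < γ ≤ 1 and let S be the span of the eigenvectors of A with eigenvalue greater than (1−γ)d, with P_S the orthogonal projection onto S. If w ∈ ℝ^{nk} is a unit vector with wᵀ M w ≥ (1−θ)d (in particular, any unit eigenvector of M with eigenvalue at least (1−θ)d), then the block-norm vector w̄ ∈ ℝ^n defined by w̄_u = ‖w_u‖₂ is a unit vector satisfying ‖w̄ − P_S w̄‖ ≤ √(θ/γ). -/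
open Matrix Finset

/-!
Cauchy–Schwarz on each block gives `xᵀ M x ≤ x̄ᵀ A x̄`, so the block-norm vector `x̄`, which has the
same norm as `x`, has Rayleigh quotient at least `(1 - θ) d` for `A`. Expanding `x̄` in an
eigenbasis of `A`, whose eigenvalues are at most `d` by regularity, the mass `m` of `x̄` on
eigenvalues `≤ (1 - γ) d` satisfies `(1 - θ) d ≤ d (1 - m) + (1 - γ) d m`, i.e. `m ≤ θ / γ`; and
`m` bounds the squared distance from `x̄` to `S`.
-/

open scoped RealInnerProductSpace

theorem Submodule.norm_sub_orthogonalProjectionOnto_le {𝕜 E : Type*} [RCLike 𝕜]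
    [NormedAddCommGroup E] [InnerProductSpace 𝕜 E] (K : Submodule 𝕜 E)
    [K.HasOrthogonalProjection] (y : E) {v : E} (hv : v ∈ K) :
    ‖y - K.orthogonalProjectionOnto y‖ ≤ ‖y - v‖ := by
  rw [← starProjection_apply, starProjection_minimal]
  exact ciInf_le ⟨0, Set.forall_mem_range.mpr fun _ => norm_nonneg _⟩ (⟨v, hv⟩ : K)

namespace Matrix.IsHermitian

variable {ι : Type*} [Fintype ι] [DecidableEq ι] {A : Matrix ι ι ℝ} (hA : A.IsHermitian)

lemma dotProduct_mulVec_eq_sum_eigenvalues (y : EuclideanSpace ℝ ι) :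
    y ⬝ᵥ A *ᵥ y = ∑ i, hA.eigenvalues i * ⟪hA.eigenvectorBasis i, y⟫ ^ 2 := by
  conv_lhs => enter [2, 2]; rw [← hA.eigenvectorBasis.sum_repr' y]
  simp only [WithLp.ofLp_sum, WithLp.ofLp_smul, mulVec_sum, mulVec_smul,
    hA.mulVec_eigenvectorBasis, dotProduct_sum, dotProduct_smul, smul_eq_mul]
  refine sum_congr rfl fun i _ => ?_
  rw [EuclideanSpace.inner_eq_star_dotProduct, star_trivial]
  ring

lemma eigenvalues_le_of_dotProduct_mulVec_le {d : ℝ}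
    (h : ∀ y : ι → ℝ, y ⬝ᵥ A *ᵥ y ≤ d * (y ⬝ᵥ y)) (i : ι) : hA.eigenvalues i ≤ d := by
  have hunit : (hA.eigenvectorBasis i : ι → ℝ) ⬝ᵥ hA.eigenvectorBasis i = 1 := by
    simpa [real_inner_self_eq_norm_sq] using
      (EuclideanSpace.inner_eq_star_dotProduct (hA.eigenvectorBasis i) (hA.eigenvectorBasis i)).symm
  simpa [hA.eigenvalues_eq, hunit] using h (hA.eigenvectorBasis i)

theorem mul_norm_sub_orthogonalProjectionOnto_sq_le {d t : ℝ} (htd : t ≤ d)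
    (hle : ∀ i, hA.eigenvalues i ≤ d) (S : Submodule ℝ (EuclideanSpace ℝ ι))
    (hS : ∀ i, t < hA.eigenvalues i → hA.eigenvectorBasis i ∈ S) (y : EuclideanSpace ℝ ι) :
    (d - t) * ‖y - S.orthogonalProjectionOnto y‖ ^ 2 ≤ d * ‖y‖ ^ 2 - y ⬝ᵥ A *ᵥ y := by
  set B := hA.eigenvectorBasis
  set c : ι → ℝ := fun i => ⟪B i, y⟫
  set T := univ.filter fun i => t < hA.eigenvalues i
  set v := ∑ i ∈ T, c i • B i
  have hvS : v ∈ S := S.sum_mem fun i hi => S.smul_mem _ (hS i (mem_filter.mp hi).2)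
  have hres : y - v = ∑ i ∈ Tᶜ, c i • B i := by
    rw [sub_eq_iff_eq_add', sum_add_sum_compl]
    exact (B.sum_repr' y).symm
  have hres_sq : ‖y - v‖ ^ 2 = ∑ i ∈ Tᶜ, c i ^ 2 := by
    rw [hres, ← real_inner_self_eq_norm_sq, B.orthonormal.inner_sum]
    simp [sq]
  calc (d - t) * ‖y - S.orthogonalProjectionOnto y‖ ^ 2
      ≤ (d - t) * ‖y - v‖ ^ 2 := by
        gcongr
        exact S.norm_sub_orthogonalProjectionOnto_le y hvS
    _ = ∑ i ∈ Tᶜ, (d - t) * c i ^ 2 := by rw [hres_sq, mul_sum]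
    _ ≤ ∑ i ∈ Tᶜ, (d - hA.eigenvalues i) * c i ^ 2 := by
        refine sum_le_sum fun i hi => ?_
        have : hA.eigenvalues i ≤ t := by simpa [T] using hi
        gcongr
    _ ≤ ∑ i, (d - hA.eigenvalues i) * c i ^ 2 :=
        sum_le_sum_of_subset_of_nonneg (subset_univ _) fun i _ _ =>
          mul_nonneg (sub_nonneg.mpr (hle i)) (sq_nonneg _)
    _ = d * ‖y‖ ^ 2 - y ⬝ᵥ A *ᵥ y := by
        simp only [sub_mul, sum_sub_distrib, ← mul_sum, B.sum_sq_inner_right,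
          hA.dotProduct_mulVec_eq_sum_eigenvalues, c, B]

end Matrix.IsHermitian

lemma Matrix.dotProduct_mulVec_self_eq_sum {ι : Type*} [Fintype ι] (A : Matrix ι ι ℝ)
    (y : ι → ℝ) : y ⬝ᵥ A *ᵥ y = ∑ u, ∑ v, A u v * (y u * y v) := by
  simp only [dotProduct, mulVec, mul_sum]
  exact sum_congr rfl fun u _ => sum_congr rfl fun v _ => by ring

section UniqueGames

variable {ι κ : Type*} [Fintype ι] [Fintype κ]

def labelExtended [DecidableEq κ] (A : Matrix ι ι ℝ) (π : ι → ι → Equiv.Perm κ) :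
    Matrix (ι × κ) (ι × κ) ℝ :=
  of fun p q => A p.1 q.1 * if π p.1 q.1 p.2 = q.2 then 1 else 0

noncomputable def blockNorm (x : ι × κ → ℝ) (u : ι) : ℝ := √(∑ i, x (u, i) ^ 2)

lemma sum_sq_blockNorm (x : ι × κ → ℝ) : ∑ u, blockNorm x u ^ 2 = ∑ p, x p ^ 2 := by
  simp only [blockNorm, Fintype.sum_prod_type]
  exact sum_congr rfl fun u _ => Real.sq_sqrt (sum_nonneg fun i _ => sq_nonneg _)

lemma norm_toLp_blockNorm (x : EuclideanSpace ℝ (ι × κ)) :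
    ‖WithLp.toLp 2 (blockNorm x)‖ = ‖x‖ := by
  rw [← sq_eq_sq₀ (norm_nonneg _) (norm_nonneg _), EuclideanSpace.real_norm_sq_eq,
    EuclideanSpace.real_norm_sq_eq]
  exact sum_sq_blockNorm x

lemma dotProduct_labelExtended_mulVec [DecidableEq κ] (A : Matrix ι ι ℝ)
    (π : ι → ι → Equiv.Perm κ) (x : ι × κ → ℝ) :
    x ⬝ᵥ labelExtended A π *ᵥ x = ∑ u, ∑ v, A u v * ∑ i, x (u, i) * x (v, π u v i) := by
  simp only [dotProduct_mulVec_self_eq_sum, labelExtended, of_apply, Fintype.sum_prod_type,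
    mul_ite, mul_one, mul_zero, ite_mul, zero_mul, mul_sum, sum_ite_eq, mem_univ, if_true]
  exact sum_congr rfl fun u _ => sum_comm

lemma dotProduct_labelExtended_mulVec_le [DecidableEq κ] {A : Matrix ι ι ℝ}
    (hA : ∀ u v, 0 ≤ A u v) (π : ι → ι → Equiv.Perm κ) (x : ι × κ → ℝ) :
    x ⬝ᵥ labelExtended A π *ᵥ x ≤ blockNorm x ⬝ᵥ A *ᵥ blockNorm x := by
  rw [dotProduct_labelExtended_mulVec, dotProduct_mulVec_self_eq_sum]
  refine sum_le_sum fun u _ => sum_le_sum fun v _ => mul_le_mul_of_nonneg_left ?_ (hA u v)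
  calc ∑ i, x (u, i) * x (v, π u v i)
      ≤ √(∑ i, x (u, i) ^ 2) * √(∑ i, x (v, π u v i) ^ 2) :=
        Real.sum_mul_le_sqrt_mul_sqrt _ _ _
    _ = blockNorm x u * blockNorm x v := by
        rw [Equiv.sum_comp (π u v) fun i => x (v, i) ^ 2]
        rfl

lemma dotProduct_mulVec_self_le_of_sum_row_eq {A : Matrix ι ι ℝ} {d : ℝ}
    (hsymm : ∀ u v, A u v = A v u) (hnonneg : ∀ u v, 0 ≤ A u v) (hreg : ∀ u, ∑ v, A u v = d)
    (y : ι → ℝ) : y ⬝ᵥ A *ᵥ y ≤ d * (y ⬝ᵥ y) := by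
  have hrow : ∑ u, ∑ v, A u v * y u ^ 2 = d * (y ⬝ᵥ y) := by
    simp only [← sum_mul, hreg, dotProduct, mul_sum, sq]
  have hcol : ∑ u, ∑ v, A u v * y v ^ 2 = d * (y ⬝ᵥ y) := by
    rw [sum_comm, ← hrow]
    simp only [hsymm]
  calc y ⬝ᵥ A *ᵥ y = ∑ u, ∑ v, A u v * (y u * y v) := dotProduct_mulVec_self_eq_sum A y
    _ ≤ ∑ u, ∑ v, (A u v * y u ^ 2 + A u v * y v ^ 2) / 2 :=
        sum_le_sum fun u _ => sum_le_sum fun v _ => by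
          nlinarith [mul_nonneg (hnonneg u v) (sq_nonneg (y u - y v))]
    _ = d * (y ⬝ᵥ y) := by
        simp only [← sum_div, sum_add_distrib, hrow, hcol]
        ring

end UniqueGames

theorem block_norm_vector_close_to_top_eigenspace_general
    {n k : ℕ} (w : Fin n → Fin n → ℝ) (d θ γ : ℝ)
    (hd : 0 < d) (hθ : 0 < θ) (hθγ : θ < γ)
    (π : Fin n → Fin n → Equiv.Perm (Fin k))
    (hw_symm : ∀ u v, w u v = w v u)
    (hw_nonneg : ∀ u v, 0 ≤ w u v)
    (hreg : ∀ u, ∑ v, w u v = d)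
    (A : Matrix (Fin n) (Fin n) ℝ) (hA : ∀ u v, A u v = w u v)
    (M : Matrix (Fin n × Fin k) (Fin n × Fin k) ℝ)
    (hM : ∀ p q, M p q = w p.1 q.1 * (if π p.1 q.1 p.2 = q.2 then 1 else 0))
    (S : Submodule ℝ (EuclideanSpace ℝ (Fin n)))
    (hS : S = Submodule.span ℝ {φ : EuclideanSpace ℝ (Fin n) |
        φ ≠ 0 ∧ ∃ μ : ℝ, (1 - γ) * d < μ ∧ A.mulVec φ = μ • φ})
    (x : EuclideanSpace ℝ (Fin n × Fin k)) (hx : ‖x‖ = 1)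
    (hquad : (1 - θ) * d ≤ x ⬝ᵥ M.mulVec x)
    (xbar : EuclideanSpace ℝ (Fin n))
    (hxbar : ∀ u, xbar u = Real.sqrt (∑ i, (x (u, i)) ^ 2)) :
    ‖xbar‖ = 1 ∧
    ‖xbar - (S.orthogonalProjectionOnto xbar : EuclideanSpace ℝ (Fin n))‖
      ≤ Real.sqrt (θ / γ) := by
  have hwA : A = w := ext hA
  subst hwA
  obtain rfl : M = labelExtended A π := ext hM
  obtain rfl : xbar = WithLp.toLp 2 (blockNorm x) := PiLp.ext hxbar
  have hherm : A.IsHermitian := ext fun u v => hw_symm v u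
  have hle := hherm.eigenvalues_le_of_dotProduct_mulVec_le
    (dotProduct_mulVec_self_le_of_sum_row_eq hw_symm hw_nonneg hreg)
  have hS_top : ∀ i, (1 - γ) * d < hherm.eigenvalues i → hherm.eigenvectorBasis i ∈ S :=
    fun i hi => hS ▸ Submodule.subset_span
      ⟨hherm.eigenvectorBasis.orthonormal.ne_zero i, _, hi, hherm.mulVec_eigenvectorBasis i⟩
  have hγ : 0 < γ := hθ.trans hθγ
  have hnorm : ‖WithLp.toLp 2 (blockNorm x)‖ = 1 := (norm_toLp_blockNorm x).trans hx
  have hdist := hherm.mul_norm_sub_orthogonalProjectionOnto_sq_le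
    (by nlinarith) hle S hS_top (WithLp.toLp 2 (blockNorm x))
  have hrayleigh := hquad.trans (dotProduct_labelExtended_mulVec_le hw_nonneg π x)
  rw [hnorm] at hdist
  refine ⟨hnorm, Real.le_sqrt_of_sq_le ?_⟩
  rw [le_div_iff₀ hγ]
  refine le_of_mul_le_mul_right ?_ hd
  linarith

/-- For a Unique Games instance on a `d`-regular weighted graph with
adjacency matrix `A`, if a unit vector `x ∈ ℝ^{nk}` has `xᵀ M x ≥ (1−θ)d` (e.g. a
unit eigenvector of `M` with eigenvalue at least `(1−θ)d`), then the block-norm vector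
`x̄` is a unit vector with `‖x̄ − P_S x̄‖ ≤ √(θ/γ)`, where `S` is the span of
eigenvectors of `A` with eigenvalue greater than `(1−γ)d` and `0 < θ < γ ≤ 1`. -/
theorem block_norm_vector_close_to_top_eigenspace
    {n k : ℕ} (w : Fin n → Fin n → ℝ) (d θ γ : ℝ)
    (hd : 0 < d) (hθ : 0 < θ) (hθγ : θ < γ) (hγ : γ ≤ 1)
    (π : Fin n → Fin n → Equiv.Perm (Fin k))
    (hw_symm : ∀ u v, w u v = w v u)
    (hw_nonneg : ∀ u v, 0 ≤ w u v)
    (hπ_symm : ∀ u v, π v u = (π u v)⁻¹)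
    (hreg : ∀ u, ∑ v, w u v = d)
    (A : Matrix (Fin n) (Fin n) ℝ) (hA : ∀ u v, A u v = w u v)
    (M : Matrix (Fin n × Fin k) (Fin n × Fin k) ℝ)
    (hM : ∀ p q, M p q = w p.1 q.1 * (if π p.1 q.1 p.2 = q.2 then 1 else 0))
    (S : Submodule ℝ (EuclideanSpace ℝ (Fin n)))
    (hS : S = Submodule.span ℝ {φ : EuclideanSpace ℝ (Fin n) |
        φ ≠ 0 ∧ ∃ μ : ℝ, (1 - γ) * d < μ ∧ A.mulVec φ = μ • φ})
    (x : EuclideanSpace ℝ (Fin n × Fin k)) (hx : ‖x‖ = 1)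
    (hquad : (1 - θ) * d ≤ x ⬝ᵥ M.mulVec x)
    (xbar : EuclideanSpace ℝ (Fin n))
    (hxbar : ∀ u, xbar u = Real.sqrt (∑ i, (x (u, i)) ^ 2)) :
    ‖xbar‖ = 1 ∧
    ‖xbar - (S.orthogonalProjectionOnto xbar : EuclideanSpace ℝ (Fin n))‖
      ≤ Real.sqrt (θ / γ) :=
  block_norm_vector_close_to_top_eigenspace_general w d θ γ hd hθ hθγ π hw_symm hw_nonneg hreg A hA
    M hM S hS x hx hquad xbar hxbar
end

section
/- Let R be an n×n real matrix with nonnegative entries such that every row sum satisfies ∑_v R(u,v) ≤ d and the total sum of all entries satisfies ∑_{u,v} R(u,v) ≤ ε n d, where d > 0 and ε > 0. Let φ ∈ ℝ^n satisfy |φ_u| ≤ C/√n for all u. Then ‖Rφ‖₂ ≤ C·√ε·d. -/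
open Matrix Finset

/-!
Each entry of `Rφ` is at most `(C/√n) · ∑_v R(u,v)` in absolute value, and the square of a row
sum is at most `d` times that row sum. Summing over the rows gives
`‖Rφ‖² ≤ (C²/n) · d · ∑_{u,v} R(u,v) ≤ C² ε d²`.
-/

section

variable {ι : Type*} [Fintype ι] {R : Matrix ι ι ℝ} {φ : ι → ℝ} {c d : ℝ}

lemma abs_mulVec_le_mul_sum_row (hR : ∀ u v, 0 ≤ R u v) (hφ : ∀ v, |φ v| ≤ c) (u : ι) :
    |(R *ᵥ φ) u| ≤ c * ∑ v, R u v := by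
  rw [mul_sum]
  refine (abs_sum_le_sum_abs _ _).trans (sum_le_sum fun v _ => ?_)
  rw [abs_mul, abs_of_nonneg (hR u v), mul_comm c]
  exact mul_le_mul_of_nonneg_left (hφ v) (hR u v)

lemma sum_sq_mulVec_le (hR : ∀ u v, 0 ≤ R u v) (hrow : ∀ u, ∑ v, R u v ≤ d)
    (hφ : ∀ v, |φ v| ≤ c) :
    ∑ u, (R *ᵥ φ) u ^ 2 ≤ c ^ 2 * d * ∑ u, ∑ v, R u v := by
  rw [mul_sum]
  refine sum_le_sum fun u _ => ?_
  have hrow_nonneg : 0 ≤ ∑ v, R u v := sum_nonneg fun v _ => hR u v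
  calc (R *ᵥ φ) u ^ 2 = |(R *ᵥ φ) u| ^ 2 := (sq_abs _).symm
    _ ≤ (c * ∑ v, R u v) ^ 2 := by gcongr; exact abs_mulVec_le_mul_sum_row hR hφ u
    _ = c ^ 2 * ((∑ v, R u v) * ∑ v, R u v) := by ring
    _ ≤ c ^ 2 * (d * ∑ v, R u v) := by gcongr; exact hrow u
    _ = c ^ 2 * d * ∑ v, R u v := by ring

end

theorem sparse_matrix_flat_vector_bound_general
    {n : ℕ} (hn : 0 < n) (R : Matrix (Fin n) (Fin n) ℝ)
    (d ε C : ℝ) (hd : 0 < d)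
    (hR_nonneg : ∀ u v, 0 ≤ R u v)
    (hrow : ∀ u, ∑ v, R u v ≤ d)
    (htot : ∑ u, ∑ v, R u v ≤ ε * n * d)
    (φ : EuclideanSpace ℝ (Fin n))
    (hφ : ∀ u, |φ u| ≤ C / Real.sqrt n) :
    ‖(show EuclideanSpace ℝ (Fin n) from WithLp.toLp 2 (R.mulVec φ))‖ ≤ C * Real.sqrt ε * d := by
  have hn' : (0 : ℝ) < n := Nat.cast_pos.mpr hn
  have hsqrt_n : 0 < Real.sqrt n := Real.sqrt_pos.mpr hn'
  have hC : 0 ≤ C := by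
    simpa using (le_div_iff₀ hsqrt_n).mp ((abs_nonneg _).trans (hφ ⟨0, hn⟩))
  have hsq : ∑ u, (R *ᵥ φ) u ^ 2 ≤ ε * (C * d) ^ 2 :=
    calc ∑ u, (R *ᵥ φ) u ^ 2 ≤ (C / Real.sqrt n) ^ 2 * d * ∑ u, ∑ v, R u v :=
          sum_sq_mulVec_le hR_nonneg hrow hφ
      _ ≤ (C / Real.sqrt n) ^ 2 * d * (ε * n * d) := by gcongr
      _ = ε * (C * d) ^ 2 := by
          rw [div_pow, Real.sq_sqrt hn'.le]
          field_simp
  rw [EuclideanSpace.norm_eq]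
  calc Real.sqrt (∑ u, ‖(R *ᵥ φ) u‖ ^ 2) = Real.sqrt (∑ u, (R *ᵥ φ) u ^ 2) := by
        simp only [Real.norm_eq_abs, sq_abs]
    _ ≤ Real.sqrt (ε * (C * d) ^ 2) := Real.sqrt_le_sqrt hsq
    _ = C * Real.sqrt ε * d := by
        rw [Real.sqrt_mul' _ (sq_nonneg _), Real.sqrt_sq (by positivity)]
        ring

/-- If `R` is an `n×n` nonnegative matrix with row sums at most `d`
and total entry sum at most `εnd`, and `φ` satisfies `|φ_u| ≤ C/√n` for all `u`, then
`‖Rφ‖₂ ≤ C√ε·d`. -/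
theorem sparse_matrix_flat_vector_bound
    {n : ℕ} (hn : 0 < n) (R : Matrix (Fin n) (Fin n) ℝ)
    (d ε C : ℝ) (hd : 0 < d) (hε : 0 < ε)
    (hR_nonneg : ∀ u v, 0 ≤ R u v)
    (hrow : ∀ u, ∑ v, R u v ≤ d)
    (htot : ∑ u, ∑ v, R u v ≤ ε * n * d)
    (φ : EuclideanSpace ℝ (Fin n))
    (hφ : ∀ u, |φ u| ≤ C / Real.sqrt n) :
    ‖(show EuclideanSpace ℝ (Fin n) from WithLp.toLp 2 (R.mulVec φ))‖ ≤ C * Real.sqrt ε * d :=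
  sparse_matrix_flat_vector_bound_general hn R d ε C hd hR_nonneg hrow htot φ hφ
end

section
/- Let a Unique Games instance on a weighted graph G with label-extended adjacency matrix M be given, and suppose the labeling L : V → [k] satisfies every constraint (π_{uv}(L(u)) = L(v) for all pairs with w_{uv} > 0). Let A be the adjacency matrix of G (A(u,v) = w_{uv}), and let φ ∈ ℝ^n be an eigenvector of A with eigenvalue λ. Define z ∈ ℝ^{nk} by z(u,i) = φ_u if i = L(u) and z(u,i) = 0 otherwise. Then M z = λ z; that is, z is an eigenvector of M with the same eigenvalue λ. -/
open Matrix Finset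

/-- If a labeling `L` satisfies every constraint of a Unique Games
instance and `φ` is an eigenvector of the adjacency matrix `A` of the constraint graph
with eigenvalue `λ`, then the vector `z` supported on the labeling (with `z(u,L(u)) = φ_u`
and `0` elsewhere) is an eigenvector of the label-extended matrix `M` with the same
eigenvalue `λ`. -/
theorem lifted_eigenvector_of_satisfying_labeling
    {n k : ℕ} (w : Fin n → Fin n → ℝ)
    (π : Fin n → Fin n → Equiv.Perm (Fin k))
    (hw_symm : ∀ u v, w u v = w v u)
    (hw_nonneg : ∀ u v, 0 ≤ w u v)
    (hπ_symm : ∀ u v, π v u = (π u v)⁻¹)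
    (A : Matrix (Fin n) (Fin n) ℝ) (hA : ∀ u v, A u v = w u v)
    (M : Matrix (Fin n × Fin k) (Fin n × Fin k) ℝ)
    (hM : ∀ p q, M p q = w p.1 q.1 * (if π p.1 q.1 p.2 = q.2 then 1 else 0))
    (L : Fin n → Fin k)
    (hL : ∀ u v, 0 < w u v → π u v (L u) = L v)
    (φ : Fin n → ℝ) (lam : ℝ)
    (hφ : A.mulVec φ = lam • φ)
    (z : Fin n × Fin k → ℝ)
    (hz : ∀ p, z p = if p.2 = L p.1 then φ p.1 else 0) :
    M.mulVec z = lam • z := by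
  funext p
  obtain ⟨u, i⟩ := p
  have key : ∀ v : Fin n, ∀ j : Fin k,
      M (u, i) (v, j) * z (v, j)
        = (if i = L u then w u v * φ v else 0) * (if j = L v then 1 else 0) := by
    intro v j
    rw [hM, hz]
    simp only
    by_cases hj : j = L v
    · subst hj
      simp only [if_pos rfl, mul_one]
      rcases (hw_nonneg u v).lt_or_eq with hwp | hw0
      · have hLuv := hL u v hwp
        by_cases hi : i = L u
        · subst hi
          rw [if_pos hLuv, if_pos rfl]; simp
        · rw [if_neg (fun h => hi (by
            have := hLuv ▸ h
            exact (π u v).injective this)), if_neg hi]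
          ring
      · rw [← hw0]; simp
    · simp [hj]
  have hmv : M.mulVec z (u, i) = ∑ q : Fin n × Fin k, M (u, i) q * z q := by
    simp [Matrix.mulVec, dotProduct]
  rw [hmv, Fintype.sum_prod_type]
  simp only [key, mul_ite, mul_one, mul_zero, Finset.sum_ite_eq', Finset.mem_univ, if_pos]
  have hAu := congrFun hφ u
  simp only [Matrix.mulVec, dotProduct, Pi.smul_apply, smul_eq_mul] at hAu
  by_cases hi : i = L u
  · simp only [if_pos hi]
    have : ∑ v : Fin n, w u v * φ v = lam * φ u := by
      rw [← hAu]; apply Finset.sum_congr rfl; intro v _; rw [hA]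
    rw [this, Pi.smul_apply, smul_eq_mul, hz]
    simp [hi]
  · simp only [if_neg hi, Finset.sum_const_zero]
    rw [Pi.smul_apply, smul_eq_mul, hz]
    simp [hi]
end
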